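/- Let V be a finite-dimensional ℂ-vector space and a ∈ GL(V) an invertible linear map such that a is conjugate (in GL(V)) to ζ·a, where ζ = e^{2πi/n} is a primitive n-th root of unity and n = dim V. Then a has n distinct eigenvalues; in particular every eigenspace of a is one-dimensional. -/

import Mathlib

/-!
Conjugating `a` by `g` turns an eigenvector for `μ` into one for `ζ * μ`, so the finite set of
eigenvalues of `a` is stable under multiplication by `ζ`. As `a` is invertible it has a nonzero
eigenvalue, whose orbit `μ, ζ μ, …, ζ^(n-1) μ` already consists of `n` distinct eigenvalues.
The eigenspaces are independent, so their dimensions add up to at most `n`; with at least `n`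
eigenvalues this forces exactly `n` of them, each with a line as eigenspace.
-/

open Module

theorem iSupIndep.sum_finrank_le {K V ι : Type*} [Field K] [AddCommGroup V] [Module K V]
    [FiniteDimensional K V] [Fintype ι] {p : ι → Submodule K V} (hp : iSupIndep p) :
    ∑ i, finrank K (p i) ≤ finrank K V := by
  classical
  rw [← finrank_directSum]
  exact LinearMap.finrank_le_finrank_of_injective hp.dfinsupp_lsum_injective

theorem IsPrimitiveRoot.le_ncard_of_mul_mem {R : Type*} [CommRing R] [IsDomain R] {ζ : R}
    {n : ℕ} (hζ : IsPrimitiveRoot ζ n) {S : Set R} (hS : S.Finite)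
    (hmul : ∀ x ∈ S, ζ * x ∈ S) {x : R} (hx : x ∈ S) (hx0 : x ≠ 0) : n ≤ S.ncard := by
  have hpow : ∀ k : ℕ, ζ ^ k * x ∈ S := by
    intro k
    induction k with
    | zero => simpa using hx
    | succ k ih => simpa [pow_succ', mul_assoc] using hmul _ ih
  rw [Set.ncard_eq_toFinset_card S hS]
  simpa using Finset.card_le_card_of_injOn (s := Finset.range n) (fun k => ζ ^ k * x)
    (fun k _ => by simpa using hpow k)
    (fun i hi j hj h => hζ.pow_inj (by simpa using hi) (by simpa using hj)
      (mul_right_cancel₀ hx0 h))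

namespace Module.End

variable {K V : Type*} [Field K] [AddCommGroup V] [Module K V]

theorem HasEigenvalue.mul_of_conj {f : End K V} {g : V ≃ₗ[K] V} {c μ : K}
    (hg : ∀ v, g (f (g.symm v)) = c • f v) (h : f.HasEigenvalue μ) :
    f.HasEigenvalue (c * μ) := by
  obtain ⟨w, hw⟩ := h.exists_hasEigenvector
  refine hasEigenvalue_of_hasEigenvector (x := g.symm w) ⟨?_, by simpa using hw.2⟩
  rw [mem_eigenspace_iff]
  calc f (g.symm w) = g.symm (g (f (g.symm w))) := (g.symm_apply_apply _).symm
    _ = (c * μ) • g.symm w := by rw [hg, hw.apply_eq_smul, smul_smul, map_smul]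

theorem _root_.LinearEquiv.ne_zero_of_hasEigenvalue (a : V ≃ₗ[K] V) {μ : K}
    (h : HasEigenvalue (a : End K V) μ) : μ ≠ 0 := by
  rintro rfl
  obtain ⟨v, hv⟩ := h.exists_hasEigenvector
  exact hv.2 (a.injective (by simpa using hv.apply_eq_smul))

theorem sum_finrank_eigenspace_le [FiniteDimensional K V] (f : End K V) (s : Finset K) :
    ∑ μ ∈ s, finrank K (f.eigenspace μ) ≤ finrank K V := by
  rw [← Finset.sum_coe_sort]
  exact (f.eigenspaces_iSupIndep.comp Subtype.val_injective).sum_finrank_le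

theorem finrank_eigenspace_eq_one_of_finrank_le_ncard [FiniteDimensional K V] (f : End K V)
    (h : finrank K V ≤ {μ | f.HasEigenvalue μ}.ncard) :
    {μ | f.HasEigenvalue μ}.ncard = finrank K V ∧
      ∀ μ, f.HasEigenvalue μ → finrank K (f.eigenspace μ) = 1 := by
  set s := f.finite_hasEigenvalue.toFinset
  have hs : {μ | f.HasEigenvalue μ}.ncard = ∑ μ ∈ s, 1 := by
    rw [Set.ncard_eq_toFinset_card _ f.finite_hasEigenvalue, Finset.card_eq_sum_ones]
  have hpos : ∀ μ ∈ s, 1 ≤ finrank K (f.eigenspace μ) := fun μ hμ =>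
    Submodule.one_le_finrank_iff.mpr (hasEigenvalue_iff.mp (by simpa [s] using hμ))
  have hsum := f.sum_finrank_eigenspace_le s
  have hsum_eq : ∑ μ ∈ s, 1 = ∑ μ ∈ s, finrank K (f.eigenspace μ) :=
    le_antisymm (Finset.sum_le_sum hpos) (by omega)
  have hone := (Finset.sum_eq_sum_iff_of_le hpos).mp hsum_eq
  exact ⟨by omega, fun μ hμ => (hone μ (by simpa [s] using hμ)).symm⟩

end Module.End

/-- if `a ∈ GL(V)` (with `V` a finite-dimensional complex vector space of
dimension `n ≥ 1`) is conjugate to `ζ·a` with `ζ = e^{2πi/n}`, then `a` has `n` distinct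
eigenvalues, and every eigenspace of `a` is one-dimensional. -/
theorem stmt4 {V : Type*} [AddCommGroup V] [Module ℂ V] [FiniteDimensional ℂ V]
    (hn : 0 < Module.finrank ℂ V)
    (a : V ≃ₗ[ℂ] V)
    (hconj : ∃ g : V ≃ₗ[ℂ] V, ∀ v : V, g (a (g.symm v)) =
      Complex.exp (2 * Real.pi * Complex.I / (Module.finrank ℂ V : ℂ)) • a v) :
    {μ : ℂ | Module.End.HasEigenvalue (a : V →ₗ[ℂ] V) μ}.ncard = Module.finrank ℂ V ∧
      ∀ μ : ℂ, Module.End.HasEigenvalue (a : V →ₗ[ℂ] V) μ →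
        Module.finrank ℂ (Module.End.eigenspace (a : V →ₗ[ℂ] V) μ) = 1 := by
  obtain ⟨g, hg⟩ := hconj
  have hζ := Complex.isPrimitiveRoot_exp _ hn.ne'
  have : Nontrivial V := Module.nontrivial_of_finrank_pos hn
  obtain ⟨μ, hμ⟩ := Module.End.exists_eigenvalue (a : Module.End ℂ V)
  refine Module.End.finrank_eigenspace_eq_one_of_finrank_le_ncard _ ?_
  exact hζ.le_ncard_of_mul_mem (Module.End.finite_hasEigenvalue _)
    (fun _ hν => hν.mul_of_conj hg) hμ (a.ne_zero_of_hasEigenvalue hμ)
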